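/- For any alphabet Σ with at least two letters, the language of CR-poor words over Σ is regular. -/

import Mathlib

variable {α : Type*}

/-- `u` is a factor (contiguous subword) of `w`. -/
def IsFactor (u w : List α) : Prop := ∃ v z : List α, w = v ++ u ++ z

/-- `u` is a border of `w`: a word different from `w` that is both a prefix and a suffix. -/
def IsBorder (u w : List α) : Prop := u ≠ w ∧ u <+: w ∧ u <:+ w

/-- `u` has an internal occurrence in `w`. -/
def HasInternalOcc (u w : List α) : Prop :=
  ∃ v z : List α, v ≠ [] ∧ z ≠ [] ∧ w = v ++ u ++ z

/-- A word is closed if it is empty or has a border with no internal occurrence. -/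
def ClosedWord (w : List α) : Prop :=
  w = [] ∨ ∃ u : List α, IsBorder u w ∧ ¬ HasInternalOcc u w

/-- The set of closed factors of `w`. -/
def closedFactors (w : List α) : Set (List α) := {u | IsFactor u w ∧ ClosedWord u}

/-- A word is CR-poor if it has exactly `|w| + 1` closed factors. -/
def IsCRPoor (w : List α) : Prop := (closedFactors w).ncard = w.length + 1

/-- `w` is a complete return to `u`: exactly two occurrences of `u` in `w`,
one as a prefix and one as a suffix. -/
def IsCompleteReturn (u w : List α) : Prop :=
  u <+: w ∧ u <:+ w ∧ {i : ℕ | i + u.length ≤ w.length ∧ u <+: w.drop i}.ncard = 2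

/-- The set of palindromic factors of `w`. -/
def palFactors (w : List α) : Set (List α) := {u | IsFactor u w ∧ u.reverse = u}

/-- `k`-fold concatenation power of a word. -/
def listPow (u : List α) : ℕ → List α
  | 0 => []
  | k + 1 => u ++ listPow u k

/-- A word is primitive if it is nonempty and not a power `u^k` with `k ≥ 2`. -/
def Primitive (v : List α) : Prop :=
  v ≠ [] ∧ ∀ (u : List α) (k : ℕ), 2 ≤ k → v ≠ listPow u k

/-- `p` is a period of `w`. -/
def HasPeriod (w : List α) (p : ℕ) : Prop := 0 < p ∧ p ≤ w.length ∧ w.drop p <+: w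

/-!
Call a closed factor of `w ++ [c]` that is not a factor of `w` new. New closed factors are
suffixes of `w ++ [c]`, and a longest closed suffix is always new: an earlier occurrence of it
would yield, through a complete return to it, a longer closed suffix. Hence every word `w` has
at least `|w| + 1` closed factors, with equality iff each letter read adds exactly one new one.

If `w` has no factor `x y t x y` with `x ≠ y`, every border of a factor of `w` is a power of a
single letter. This forces a closed proper suffix of a closed factor to occur earlier inside it,
so no step adds two new closed factors. Conversely, at the first letter `y` completing a
repeated pair `x y`, the complete returns to `x y` and to `y` are two new closed factors.

So CR-poor words are those avoiding `x y t x y`, which an automaton recognises by remembering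
the last letter and the set of adjacent pairs read so far.
-/

open List

theorem IsBorder.length_lt {b w : List α} (h : IsBorder b w) : b.length < w.length :=
  lt_of_le_of_ne h.2.1.length_le fun hlen => h.1 (h.2.1.eq_of_length hlen)

theorem ClosedWord.exists_border {v : List α} (hv : ClosedWord v) (hlen : 2 ≤ v.length) :
    ∃ b, b ≠ [] ∧ IsBorder b v ∧ ¬ HasInternalOcc b v := by
  obtain rfl | ⟨b, hb, hint⟩ := hv
  · simp at hlen
  refine ⟨b, ?_, hb, hint⟩
  rintro rfl
  obtain ⟨c, d, v, rfl⟩ : ∃ c d v', v = c :: d :: v' := by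
    match v, hlen with
    | c :: d :: v', _ => exact ⟨c, d, v', rfl⟩
  exact hint ⟨[c], d :: v, by simp, by simp, by simp⟩

theorem closedWord_singleton (c : α) : ClosedWord [c] := by
  refine Or.inr ⟨[], ⟨by simp, nil_prefix, nil_suffix⟩, ?_⟩
  rintro ⟨p, z, hp, hz, h⟩
  have := congrArg length h
  simp only [length_singleton, append_nil, length_append] at this
  have := length_pos_iff.mpr hp
  have := length_pos_iff.mpr hz
  omega

theorem exists_suffix_isBorder_not_hasInternalOcc {b u : List α} (hb : IsBorder b u) :
    ∃ v, v <:+ u ∧ IsBorder b v ∧ ¬ HasInternalOcc b v := by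
  induction hlen : u.length using Nat.strong_induction_on generalizing u with
  | _ n ih =>
  by_cases hint : HasInternalOcc b u
  · -- the suffix starting at an internal occurrence of `b` is a shorter word bordered by `b`
    obtain ⟨p, z, hp, hz, rfl⟩ := hint
    have hbz : IsBorder b (b ++ z) :=
      ⟨by simpa using hz, prefix_append b z,
        suffix_of_suffix_length_le hb.2.2 ⟨p, by simp⟩ (by simp)⟩
    obtain ⟨v, hv, hbv⟩ := ih _ (by simp [← hlen, length_pos_iff.mpr hp]) hbz rfl
    exact ⟨v, hv.trans ⟨p, by simp⟩, hbv⟩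
  · exact ⟨u, suffix_rfl, hb, hint⟩

theorem exists_suffix_isBorder_of_infix {b w : List α} {c : α} (hsuf : b <:+ w ++ [c])
    (hocc : b <:+: w) : ∃ v, v <:+ w ++ [c] ∧ IsBorder b v ∧ ¬ HasInternalOcc b v := by
  obtain ⟨p, z, rfl⟩ := hocc
  have hu : b ++ (z ++ [c]) <:+ p ++ b ++ z ++ [c] := ⟨p, by simp⟩
  have hb : IsBorder b (b ++ (z ++ [c])) :=
    ⟨by simp, prefix_append _ _, suffix_of_suffix_length_le hsuf hu (by simp)⟩
  obtain ⟨v, hv, hbv⟩ := exists_suffix_isBorder_not_hasInternalOcc hb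
  exact ⟨v, hv.trans hu, hbv⟩

theorem exists_eq_replicate_of_isChain_eq {b : List α} (hb : IsChain (· = ·) b)
    (hne : b ≠ []) : ∃ c, b = replicate b.length c := by
  obtain ⟨c, l, rfl⟩ := exists_cons_of_ne_nil hne
  exact ⟨c, by rw [isChain_cons_eq_iff_eq_replicate.mp hb]; simp [replicate_succ]⟩

theorem dropLast_suffix_of_suffix_append_singleton {u w : List α} {c : α}
    (h : u <:+ w ++ [c]) : u.dropLast <:+ w := by
  obtain rfl | ⟨t, rfl, ht⟩ := suffix_concat_iff.mp h
  · exact nil_suffix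
  · rwa [dropLast_concat]

theorem isFactor_iff_isInfix {u w : List α} : IsFactor u w ↔ u <:+: w :=
  ⟨fun ⟨v, z, h⟩ => ⟨v, z, h.symm⟩, fun ⟨v, z, h⟩ => ⟨v, z, h.symm⟩⟩

def NoRepeatedPair (w : List α) : Prop :=
  ∀ x y : α, x ≠ y → ∀ t : List α, ¬ [x, y] ++ t ++ [x, y] <:+: w

namespace NoRepeatedPair

variable {u v w b' : List α} {c : α}

theorem of_infix (hw : NoRepeatedPair w) (hu : u <:+: w) : NoRepeatedPair u :=
  fun x y hxy t ht => hw x y hxy t (ht.trans hu)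

theorem eq_of_prefix (hw : NoRepeatedPair w) {x y : α} (hxy : x ≠ y) {s s' : List α}
    (h : s ++ [x, y] <+: w) (h' : s' ++ [x, y] <+: w) : s = s' := by
  wlog hle : s.length ≤ s'.length generalizing s s'
  · exact (this h' h (by omega)).symm
  have hp : s ++ [x, y] <+: s' ++ [x, y] := prefix_of_prefix_length_le h h' (by simpa using hle)
  obtain hlen | hlen | hlen : s'.length = s.length ∨ s'.length = s.length + 1 ∨
      s.length + 2 ≤ s'.length := by omega
  · exact append_cancel_right (hp.eq_of_length (by simp [hlen]))
  · have hy := hp.getElem (i := s.length + 1) (by simp)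
    exact absurd (by simpa [getElem_append_right, hlen] using hy.symm) hxy
  · obtain ⟨m, rfl⟩ : s ++ [x, y] <+: s' :=
      prefix_of_prefix_length_le hp (prefix_append _ _) (by simpa using hlen)
    exact absurd (IsInfix.trans ⟨s, [], by simp⟩ h'.isInfix) (hw x y hxy m)

theorem isChain_eq_of_isBorder (hw : NoRepeatedPair w) {b : List α} (hb : IsBorder b w) :
    IsChain (· = ·) b := by
  obtain ⟨hne, ⟨r, rfl⟩, q, hq⟩ := hb
  refine isChain_iff_forall_rel_of_append_cons_cons.mpr fun x y s t hb => ?_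
  by_contra hxy
  have hs : s ++ [x, y] <+: b ++ r := ⟨t ++ r, by simp [hb]⟩
  have hqs : (q ++ s) ++ [x, y] <+: b ++ r := ⟨t, by rw [← hq, hb]; simp⟩
  have hq0 : q = [] := by simpa using hw.eq_of_prefix hxy hs hqs
  exact hne (by simpa [hq0] using hq)

theorem length_le_of_closed_suffix (hv : NoRepeatedPair v) (hb' : b' ≠ [])
    (hb'v : IsBorder b' v) (hint' : ¬ HasInternalOcc b' v) (huc : ClosedWord u)
    (hsuf : u <:+ v) (hne : u ≠ v) : u.length ≤ b'.length := by
  by_contra! hlt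
  obtain ⟨c, hc⟩ := exists_eq_replicate_of_isChain_eq (hv.isChain_eq_of_isBorder hb'v) hb'
  have hb'u : b' <:+ u := suffix_of_suffix_length_le hb'v.2.2 hsuf hlt.le
  have hb'len : 1 ≤ b'.length := length_pos_iff.mpr hb'
  obtain ⟨b, hb, hbu, hint⟩ := huc.exists_border (by omega)
  rcases lt_or_ge b.length b'.length with hbb' | hbb'
  · -- `b = c ^ m` with `m < k`, so `u` ends with `c ^ (m + 1) = b ++ [c]`
    have hbs : b <:+ b' := suffix_of_suffix_length_le hbu.2.2 hb'u hbb'.le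
    rw [hc, suffix_replicate_iff] at hbs
    obtain ⟨q, hq⟩ : replicate (b.length + 1) c <:+ u :=
      (suffix_replicate_iff.mpr ⟨by simp; omega, by simp⟩).trans (hc ▸ hb'u)
    refine hint ⟨q, [c], ?_, by simp, ?_⟩
    · rintro rfl
      have := congrArg length hq
      simp only [nil_append, length_replicate] at this
      omega
    · rw [← hq, replicate_succ', ← hbs.2, append_assoc]
  · -- `b'` is a prefix of the constant border `b` of `u`, so it occurs in `v` where `u` starts
    have hb'b : b' <:+ b := suffix_of_suffix_length_le hb'u hbu.2.2 hbb'
    obtain ⟨d, hd⟩ := exists_eq_replicate_of_isChain_eq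
      ((hv.of_infix hsuf.isInfix).isChain_eq_of_isBorder hbu) hb
    have hpre : b' <+: b := by
      rw [hd, suffix_replicate_iff] at hb'b
      rw [hd, prefix_replicate_iff]
      exact hb'b
    obtain ⟨t, ht⟩ := hpre.trans hbu.2.1
    obtain ⟨h, hh⟩ := hsuf
    refine hint' ⟨h, t, ?_, ?_, by rw [← hh, ← ht, append_assoc]⟩
    · rintro rfl
      exact hne hh
    · rintro rfl
      rw [append_nil] at ht
      exact absurd (ht ▸ hlt) (lt_irrefl _)

theorem infix_dropLast_of_closed_suffix (hv : NoRepeatedPair v) (hvc : ClosedWord v)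
    (huc : ClosedWord u) (hu : u ≠ []) (hsuf : u <:+ v) (hne : u ≠ v) : u <:+: v.dropLast := by
  have hlen : u.length < v.length :=
    lt_of_le_of_ne hsuf.length_le fun h => hne (hsuf.eq_of_length h)
  have hu1 : 1 ≤ u.length := length_pos_iff.mpr hu
  obtain ⟨b', hb', hb'v, hint'⟩ := hvc.exists_border (by omega)
  have hub' : u <:+ b' := suffix_of_suffix_length_le hsuf hb'v.2.2
    (hv.length_le_of_closed_suffix hb' hb'v hint' huc hsuf hne)
  have hb'drop : b' <+: v.dropLast := by
    rw [dropLast_eq_take, prefix_take_iff]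
    exact ⟨hb'v.2.1, by have := hb'v.length_lt; omega⟩
  exact hub'.isInfix.trans hb'drop.isInfix

theorem not_infix_of_isBorder_singleton (hw : NoRepeatedPair w) {x : α}
    (hx : [x] <:+ w) (hxc : x ≠ c) (hv : v <:+ w ++ [c]) (hb : IsBorder [c] v)
    (hint : ¬ HasInternalOcc [c] v) : ¬ v <:+: w := by
  obtain ⟨d, r, rfl⟩ : ∃ d r, v = c :: d :: r := by
    obtain ⟨r, rfl⟩ := hb.2.1
    have := hb.length_lt
    match r, this with
    | d :: r, _ => exact ⟨d, r, rfl⟩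
  have hr : r ≠ [] := by
    rintro rfl
    obtain rfl : d = c := by simpa using singleton_suffix_iff_getLast?_eq_some.mp hb.2.2
    obtain _ | ⟨t, ht, hts⟩ := suffix_concat_iff.mp hv
    · simp_all
    obtain rfl : t = [d] := append_cancel_right (ht.symm.trans rfl)
    exact hxc (Option.some_injective _ ((singleton_suffix_iff_getLast?_eq_some.mp hx).symm.trans
      (singleton_suffix_iff_getLast?_eq_some.mp hts)))
  have hdc : c ≠ d := by
    rintro rfl
    exact hint ⟨[c], r, by simp, hr, by simp⟩
  -- the pair `c d` at the start of `v` would occur twice in `w`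
  rintro ⟨a, z, rfl⟩
  obtain ⟨e, he⟩ := hv
  have hea : e ++ [c, d] <+: a ++ c :: d :: r ++ z := by
    refine (prefix_concat_iff.mp ⟨r, by rw [← he]; simp⟩).resolve_left fun h => ?_
    have h₁ := congrArg length h
    have h₂ := congrArg length he
    have := length_pos_iff.mpr hr
    simp only [length_append, length_cons, length_nil] at h₁ h₂
    omega
  obtain rfl := hw.eq_of_prefix hdc (s := a) ⟨r ++ z, by simp⟩ hea
  have := congrArg length he
  simp only [length_append, length_cons, length_nil] at this
  omega

theorem exists_suffix_of_not_append_singleton (hw : NoRepeatedPair w)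
    (hwc : ¬ NoRepeatedPair (w ++ [c])) : ∃ x, x ≠ c ∧ ∃ t, [x, c] ++ t ++ [x] <:+ w := by
  simp only [NoRepeatedPair, not_forall, not_not] at hwc
  obtain ⟨x, y, hxy, t, hocc⟩ := hwc
  obtain hsuf | hinf := infix_concat_iff.mp hocc
  · obtain ⟨hpw, hyc⟩ := (suffix_append_inj_of_length_eq (s₁ := [y]) (s₂ := [c]) rfl).mp
      (by simpa using hsuf : [x, y] ++ t ++ [x] ++ [y] <:+ w ++ [c])
    obtain rfl : y = c := by simpa using hyc
    exact ⟨x, hxy, t, hpw⟩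
  · exact absurd hinf (hw x y hxy t)

end NoRepeatedPair

theorem closedFactors_finite (w : List α) : (closedFactors w).Finite :=
  w.sublists.finite_toSet.subset fun _ hu =>
    mem_sublists.mpr (isFactor_iff_isInfix.mp hu.1).sublist

theorem closedFactors_nil : closedFactors ([] : List α) = {[]} := by
  ext u
  simp only [closedFactors, isFactor_iff_isInfix, infix_nil, Set.mem_ofPred_eq,
    Set.mem_singleton_iff, and_iff_left_iff_imp]
  rintro rfl
  exact Or.inl rfl

def newClosedFactors (w : List α) (c : α) : Set (List α) :=
  {u | ClosedWord u ∧ u <:+ w ++ [c] ∧ ¬ u <:+: w}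

section NewClosedFactors

variable {w : List α} {c : α}

theorem ncard_closedFactors_append_singleton :
    (closedFactors (w ++ [c])).ncard =
      (closedFactors w).ncard + (newClosedFactors w c).ncard := by
  have hunion : closedFactors (w ++ [c]) = closedFactors w ∪ newClosedFactors w c := by
    ext u
    simp only [closedFactors, newClosedFactors, isFactor_iff_isInfix, infix_concat_iff,
      Set.mem_union, Set.mem_ofPred_eq]
    tauto
  have hdisj : Disjoint (closedFactors w) (newClosedFactors w c) :=
    Set.disjoint_left.mpr fun _ hu hu' => hu'.2.2 (isFactor_iff_isInfix.mp hu.1)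
  rw [hunion, Set.ncard_union_eq hdisj (closedFactors_finite w)
    ((closedFactors_finite _).subset (hunion ▸ Set.subset_union_right))]

theorem newClosedFactors_finite : (newClosedFactors w c).Finite :=
  (w ++ [c]).tails.finite_toSet.subset fun _ hu => (mem_tails _ _).mpr hu.2.1

theorem newClosedFactors_nonempty : (newClosedFactors w c).Nonempty := by
  have hfin : {u | ClosedWord u ∧ u <:+ w ++ [c]}.Finite :=
    (w ++ [c]).tails.finite_toSet.subset fun _ hu => (mem_tails _ _).mpr hu.2
  obtain ⟨u, ⟨huc, hus⟩, hmax⟩ := Set.exists_max_image _ length hfin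
    ⟨[c], closedWord_singleton c, suffix_append w [c]⟩
  refine ⟨u, huc, hus, fun hocc => ?_⟩
  obtain ⟨v, hv, hbv, hint⟩ := exists_suffix_isBorder_of_infix hus hocc
  have := hmax v ⟨Or.inr ⟨u, hbv, hint⟩, hv⟩
  exact absurd hbv.length_lt (not_lt.mpr this)

theorem newClosedFactors_subsingleton (hw : NoRepeatedPair (w ++ [c])) :
    (newClosedFactors w c).Subsingleton := by
  intro u hu u' hu'
  wlog h : u <:+ u' generalizing u u'
  · exact (this hu' hu ((suffix_or_suffix_of_suffix hu.2.1 hu'.2.1).resolve_left h)).symm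
  by_contra hne
  have hu0 : u ≠ [] := by
    rintro rfl
    exact hu.2.2 nil_infix
  have := (hw.of_infix hu'.2.1.isInfix).infix_dropLast_of_closed_suffix hu'.1 hu.1 hu0 h hne
  exact hu.2.2 (this.trans (dropLast_suffix_of_suffix_append_singleton hu'.2.1).isInfix)

theorem two_le_ncard_newClosedFactors (hw : NoRepeatedPair w)
    (hwc : ¬ NoRepeatedPair (w ++ [c])) : 2 ≤ (newClosedFactors w c).ncard := by
  obtain ⟨x, hxy, t, hpw⟩ := hw.exists_suffix_of_not_append_singleton hwc
  have hx : [x] <:+ w := (suffix_append _ _).trans hpw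
  have hpair : [x, c] <:+: w := (IsPrefix.isInfix ⟨t ++ [x], by simp⟩).trans hpw.isInfix
  obtain ⟨u₁, hu₁, hb₁, hi₁⟩ := exists_suffix_isBorder_of_infix (b := [x, c]) (c := c)
    (by obtain ⟨q, hq⟩ := hx; exact ⟨q, by rw [← hq]; simp⟩) hpair
  obtain ⟨u₂, hu₂, hb₂, hi₂⟩ := exists_suffix_isBorder_of_infix (b := [c])
    (suffix_append _ _) ((IsSuffix.isInfix ⟨[x], rfl⟩).trans hpair)
  have hmem₁ : u₁ ∈ newClosedFactors w c := ⟨Or.inr ⟨_, hb₁, hi₁⟩, hu₁,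
    fun h => hxy (by simpa using (hw.of_infix h).isChain_eq_of_isBorder hb₁)⟩
  have hmem₂ : u₂ ∈ newClosedFactors w c := ⟨Or.inr ⟨_, hb₂, hi₂⟩, hu₂,
    hw.not_infix_of_isBorder_singleton hx hxy hu₂ hb₂ hi₂⟩
  have hne : u₁ ≠ u₂ := by
    rintro rfl
    have h₁ := singleton_prefix_iff_head?_eq_some.mp ((IsPrefix.trans ⟨[c], rfl⟩ hb₁.2.1))
    have h₂ := singleton_prefix_iff_head?_eq_some.mp hb₂.2.1
    exact hxy (Option.some_injective _ (h₁.symm.trans h₂))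
  calc 2 = ({u₁, u₂} : Set (List α)).ncard := (Set.ncard_pair hne).symm
    _ ≤ _ := Set.ncard_le_ncard (Set.insert_subset hmem₁ (Set.singleton_subset_iff.mpr hmem₂))
      newClosedFactors_finite

end NewClosedFactors

theorem isCRPoor_iff_noRepeatedPair (w : List α) : IsCRPoor w ↔ NoRepeatedPair w := by
  suffices h : (NoRepeatedPair w → (closedFactors w).ncard = w.length + 1) ∧
      (¬ NoRepeatedPair w → w.length + 1 < (closedFactors w).ncard) by
    by_cases hw : NoRepeatedPair w
    · exact iff_of_true (h.1 hw) hw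
    · exact iff_of_false (h.2 hw).ne' hw
  induction w using reverseRecOn with
  | nil =>
    refine ⟨fun _ => by simp [closedFactors_nil], fun h => absurd ?_ h⟩
    exact fun x y _ t ht => by simp at ht
  | append_singleton w c ih =>
    rw [ncard_closedFactors_append_singleton, length_append, length_singleton]
    have hpos : 0 < (newClosedFactors w c).ncard :=
      (Set.ncard_pos newClosedFactors_finite).mpr newClosedFactors_nonempty
    refine ⟨fun hwc => ?_, fun hwc => ?_⟩
    · have hle : (newClosedFactors w c).ncard ≤ 1 :=
        (Set.ncard_le_one newClosedFactors_finite).mpr (newClosedFactors_subsingleton hwc)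
      have := ih.1 (hwc.of_infix (prefix_append w [c]).isInfix)
      omega
    · by_cases hw : NoRepeatedPair w
      · have := ih.1 hw
        have := two_le_ncard_newClosedFactors hw hwc
        omega
      · have := ih.2 hw
        omega

theorem pair_infix_append_singleton_iff {w : List α} {x y c : α} :
    [x, y] <:+: w ++ [c] ↔ [x, y] <:+: w ∨ (x ∈ w.getLast? ∧ y = c) := by
  rw [infix_concat_iff, or_comm, ← singleton_append (x := x),
    suffix_append_inj_of_length_eq (s₁ := [y]) (s₂ := [c]) rfl,
    singleton_suffix_iff_getLast?_eq_some, singleton_inj, Option.mem_def]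

theorem noRepeatedPair_append_singleton_iff {w : List α} {c : α} :
    NoRepeatedPair (w ++ [c]) ↔
      NoRepeatedPair w ∧ ∀ x ∈ w.getLast?, x ≠ c → ¬ [x, c] <:+: w := by
  refine ⟨fun hwc => ⟨hwc.of_infix (prefix_append w [c]).isInfix, fun x hx hxc hocc => ?_⟩,
    fun ⟨hw, h⟩ => by_contra fun hwc => ?_⟩
  · -- `x c` would occur both inside `w` and at the end of `w ++ [c]`
    obtain ⟨q, rfl⟩ := singleton_suffix_iff_getLast?_eq_some.mpr hx
    obtain ⟨a, z, ha⟩ := hocc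
    obtain rfl := hwc.eq_of_prefix hxc (s := a) (s' := q)
      ⟨z ++ [c], by rw [← ha]; simp⟩ ⟨[], by simp⟩
    have := congrArg length ha
    simp only [length_append, length_cons, length_nil] at this
    omega
  · obtain ⟨x, hxc, t, hpw⟩ := hw.exists_suffix_of_not_append_singleton hwc
    exact h x (singleton_suffix_iff_getLast?_eq_some.mp ((suffix_append _ _).trans hpw)) hxc
      ((IsPrefix.isInfix ⟨t ++ [x], by simp⟩).trans hpw.isInfix)

theorem Language.isRegular_of_forall_append_singleton {σ : Type*} [Finite σ] {L : Language α}
    (f : List α → σ) (step : σ → α → σ) (accept : Set σ)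
    (hstep : ∀ w c, f (w ++ [c]) = step (f w) c) (hL : ∀ w, w ∈ L ↔ f w ∈ accept) :
    L.IsRegular := by
  let M : DFA α σ := ⟨step, f [], accept⟩
  have heval : ∀ w, M.eval w = f w := by
    intro w
    induction w using reverseRecOn with
    | nil => rfl
    | append_singleton w c ih => rw [DFA.eval_append_singleton, ih, hstep]
  have := Fintype.ofFinite σ
  refine Language.isRegular_iff.mpr ⟨σ, this, M, ?_⟩
  ext w
  change M.eval w ∈ accept ↔ w ∈ L
  rw [heval, hL]

theorem isRegular_setOf_noRepeatedPair [Finite α] :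
    Language.IsRegular {w : List α | NoRepeatedPair w} := by
  refine Language.isRegular_of_forall_append_singleton
    (fun w => (w.getLast?, {p : α × α | [p.1, p.2] <:+: w}, NoRepeatedPair w))
    (fun s c => (some c, s.2.1 ∪ {p | p.1 ∈ s.1 ∧ p.2 = c},
      s.2.2 ∧ ∀ x ∈ s.1, x ≠ c → (x, c) ∉ s.2.1))
    {s | s.2.2} (fun w c => ?_) (fun w => Iff.rfl)
  simp only [getLast?_append, getLast?_singleton, Option.some_or, Prod.mk.injEq, true_and]
  exact ⟨Set.ext fun p => pair_infix_append_singleton_iff,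
    propext noRepeatedPair_append_singleton_iff⟩

theorem stmt_15_general {α : Type u} [Fintype α] :
    Language.IsRegular {w : List α | IsCRPoor w} := by
  rw [show {w : List α | IsCRPoor w} = {w | NoRepeatedPair w} from
    Set.ext isCRPoor_iff_noRepeatedPair]
  exact isRegular_setOf_noRepeatedPair

/-- For a finite alphabet with at least two letters, the language of CR-poor
words is regular. -/
theorem stmt_15 {α : Type u} [Fintype α] (a b : α) (hab : a ≠ b) :
    Language.IsRegular {w : List α | IsCRPoor w} :=
  stmt_15_general
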